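/- For all integers k ≥ 1 and m ≥ 1, the commutator [c_k, x_2] = [x_2, x_3, …, x_3, x_2] (with k occurrences of x_3) does not belong to S_m. -/

import Mathlib

noncomputable section
open FreeAlgebra

abbrev A2 (K : Type) [Field K] := FreeAlgebra K (Fin 2)

/-- the commutators c₁ = [x₂,x₃], c_{k+1} = [c_k,x₃]; `c K k` is the paper's c_{k+1}. -/
def c (K : Type) [Field K] : ℕ → A2 K
  | 0 => ι K 0 * ι K 1 - ι K 1 * ι K 0
  | k + 1 => c K k * ι K 1 - ι K 1 * c K k

/-- `SS K m` is the paper's `S_m` for `m ≥ 1` (with `SS K 0 = {0}`, so `SS K 1 = S`). -/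
def SS (K : Type) [Field K] : ℕ → Set (A2 K)
  | 0 => {0}
  | m + 1 => {f | ∀ g ∈ Algebra.adjoin K ({ι K 1} : Set (A2 K)), ∀ h : K,
      (FreeAlgebra.lift K ![ι K 0 + g, ι K 1 + algebraMap K (A2 K) h]) f - f ∈ SS K m}

/-! The sets `S_m` form a filtration by subspaces with `S_i * S_{j+1} ⊆ S_{i+j}`, by the
Leibniz rule `φ(ab) - ab = (φa - a) φb + a (φb - b)`; the `c_t` are invariant and `x₃ ∈ S_2`.
The automorphism `x₂ ↦ x₂ + x₃^(n+1)` adds `[c_k, x₃^(n+1)]` to `[c_k, x₂]`, and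
`[c_k, x₃^(n+1)] ≡ (n+1) x₃^n c_{k+1}` modulo `S_n`. But `x₃^n c_t ∉ S_n`: the shift
`x₃ ↦ x₃ + 1` sends it modulo `S_{n-1}` to `n x₃^(n-1) c_t`, and so on down to `c_t ≠ 0`, which
is seen in `2 × 2` matrices. Characteristic zero makes the factors `n + 1` invertible. -/

lemma Submodule.nsmul_succ_mem_iff {K M : Type*} [DivisionRing K] [CharZero K] [AddCommGroup M]
    [Module K M] (p : Submodule K M) (n : ℕ) {x : M} : (n + 1) • x ∈ p ↔ x ∈ p := by
  rw [← Nat.cast_smul_eq_nsmul K, Nat.cast_succ, p.smul_mem_iff (Nat.cast_add_one_ne_zero n)]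

section

variable {K : Type} [Field K]

local notation "x₂" => (ι K 0 : A2 K)
local notation "x₃" => (ι K 1 : A2 K)

def φ (g : A2 K) (h : K) : A2 K →ₐ[K] A2 K :=
  lift K ![x₂ + g, x₃ + algebraMap K (A2 K) h]

@[simp] lemma φ_ι_zero (g : A2 K) (h : K) : φ g h x₂ = x₂ + g := by
  simp [φ]

@[simp] lemma φ_ι_one (g : A2 K) (h : K) : φ g h x₃ = x₃ + algebraMap K (A2 K) h := by
  simp [φ]

lemma φ_c {g : A2 K} (hg : g ∈ Algebra.adjoin K {x₃}) (h : K) (t : ℕ) :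
    φ g h (c K t) = c K t := by
  have hcomm : x₃ * g = g * x₃ := (Algebra.commute_of_mem_adjoin_self hg).eq
  induction t with
  | zero =>
    simp only [c, map_sub, map_mul, φ_ι_zero, φ_ι_one]
    linear_combination (norm := noncomm_ring) -hcomm
      - Algebra.commutes (A := A2 K) h x₂ - Algebra.commutes (A := A2 K) h g
  | succ t ih =>
    simp only [c, map_sub, map_mul, φ_ι_one, ih]
    linear_combination (norm := noncomm_ring) - Algebra.commutes (A := A2 K) h (c K t)

lemma c_ne_zero (t : ℕ) : c K t ≠ 0 := by
  let ψ : A2 K →ₐ[K] Matrix (Fin 2) (Fin 2) K :=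
    lift K ![Matrix.single 0 1 1, Matrix.single 1 1 1]
  have hψ : ψ (c K t) = Matrix.single 0 1 1 := by
    induction t with
    | zero => simp [ψ, c]
    | succ t ih => simp [c, ih, ψ]
  intro h0
  simpa [h0] using congrFun (congrFun hψ 0) 1

variable (K) in
def SS.submodule : ℕ → Submodule K (A2 K)
  | 0 => ⊥
  | m + 1 => ⨅ g ∈ Algebra.adjoin K {x₃}, ⨅ h : K,
      (SS.submodule m).comap ((φ g h).toLinearMap - LinearMap.id)

local notation "𝒮" => SS.submodule K

namespace SS

lemma mem_submodule_zero {f : A2 K} : f ∈ 𝒮 0 ↔ f = 0 := Submodule.mem_bot K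

lemma mem_submodule_succ {f : A2 K} {m : ℕ} :
    f ∈ 𝒮 (m + 1) ↔ ∀ g ∈ Algebra.adjoin K {x₃}, ∀ h : K, φ g h f - f ∈ 𝒮 m := by
  simp [submodule, Submodule.mem_iInf]

lemma mem_submodule_iff {f : A2 K} : ∀ {m : ℕ}, f ∈ 𝒮 m ↔ f ∈ SS K m
  | 0 => mem_submodule_zero
  | m + 1 => by rw [mem_submodule_succ]; simp only [mem_submodule_iff]; rfl

lemma submodule_le_succ : ∀ m : ℕ, 𝒮 m ≤ 𝒮 (m + 1)
  | 0 => by simp [submodule]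
  | m + 1 => fun f hf => mem_submodule_succ.2 fun g hg h =>
      submodule_le_succ m (mem_submodule_succ.1 hf g hg h)

lemma φ_mem {f : A2 K} {m : ℕ} (hf : f ∈ 𝒮 m) {g : A2 K}
    (hg : g ∈ Algebra.adjoin K {x₃}) (h : K) : φ g h f ∈ 𝒮 m := by
  cases m with
  | zero => rw [mem_submodule_zero.1 hf, map_zero]; exact zero_mem _
  | succ m =>
    simpa using add_mem (submodule_le_succ m (mem_submodule_succ.1 hf g hg h)) hf

lemma mul_mem {i j : ℕ} {a b : A2 K} (ha : a ∈ 𝒮 i) (hb : b ∈ 𝒮 (j + 1)) :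
    a * b ∈ 𝒮 (i + j) := by
  cases i with
  | zero => rw [mem_submodule_zero.1 ha, zero_mul]; exact zero_mem _
  | succ i =>
    rw [show i + 1 + j = i + j + 1 by omega, mem_submodule_succ]
    intro g hg h
    have leibniz : φ g h (a * b) - a * b = (φ g h a - a) * φ g h b + a * (φ g h b - b) := by
      rw [map_mul]; noncomm_ring
    rw [leibniz]
    refine add_mem (mul_mem (mem_submodule_succ.1 ha g hg h) (φ_mem hb hg h)) ?_
    cases j with
    | zero => rw [mem_submodule_zero.1 (mem_submodule_succ.1 hb g hg h), mul_zero]; exact zero_mem _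
    | succ j =>
      convert mul_mem ha (mem_submodule_succ.1 hb g hg h) using 2
      omega
termination_by i + j

lemma mem_submodule_one {f : A2 K}
    (hf : ∀ g ∈ Algebra.adjoin K {x₃}, ∀ h : K, φ g h f = f) : f ∈ 𝒮 1 :=
  mem_submodule_succ.2 fun g hg h => by rw [hf g hg h, sub_self]; exact zero_mem _

lemma algebraMap_mem (a : K) : algebraMap K (A2 K) a ∈ 𝒮 1 :=
  mem_submodule_one fun _ _ _ => AlgHom.commutes _ a

lemma c_mem (t : ℕ) : c K t ∈ 𝒮 1 := mem_submodule_one fun _ hg h => φ_c hg h t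

lemma ι_one_mem : x₃ ∈ 𝒮 2 :=
  mem_submodule_succ.2 fun g hg h => by simpa using algebraMap_mem h

lemma ι_one_pow_mem (n : ℕ) : x₃ ^ n ∈ 𝒮 (n + 1) := by
  induction n with
  | zero => simpa using algebraMap_mem (1 : K)
  | succ n ih => rw [pow_succ]; exact mul_mem ih ι_one_mem

lemma commutator_c_ι_one_pow_sub_mem (t n : ℕ) :
    c K t * x₃ ^ (n + 1) - x₃ ^ (n + 1) * c K t - (n + 1) • (x₃ ^ n * c K (t + 1))
      ∈ 𝒮 n := by
  induction n with
  | zero => simp [c]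
  | succ n ih =>
    have step : c K t * x₃ ^ (n + 1 + 1) - x₃ ^ (n + 1 + 1) * c K t
          - (n + 1 + 1) • (x₃ ^ (n + 1) * c K (t + 1))
        = (c K t * x₃ ^ (n + 1) - x₃ ^ (n + 1) * c K t
            - (n + 1) • (x₃ ^ n * c K (t + 1))) * x₃
          + (n + 1) • (x₃ ^ n * c K (t + 2)) := by
      simp only [c, pow_succ, succ_nsmul, mul_sub, sub_mul,
        add_mul, smul_sub, smul_mul_assoc, mul_assoc]
      abel
    rw [step]
    exact add_mem (mul_mem ih ι_one_mem)
      (nsmul_mem (mul_mem (ι_one_pow_mem n) (c_mem _)) _)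

lemma add_one_pow_sub_pow_sub_mem (n : ℕ) :
    (x₃ + 1) ^ (n + 1) - x₃ ^ (n + 1) - (n + 1) • x₃ ^ n ∈ 𝒮 n := by
  induction n with
  | zero => simp
  | succ n ih =>
    have step : (x₃ + 1) ^ (n + 1 + 1) - x₃ ^ (n + 1 + 1) - (n + 1 + 1) • x₃ ^ (n + 1)
        = ((x₃ + 1) ^ (n + 1) - x₃ ^ (n + 1) - (n + 1) • x₃ ^ n) * (x₃ + 1)
          + (n + 1) • x₃ ^ n := by
      simp only [pow_succ, succ_nsmul, mul_add, mul_one,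
        sub_mul, add_mul, smul_mul_assoc, mul_assoc]
      abel
    rw [step]
    exact add_mem (mul_mem ih (add_mem ι_one_mem (submodule_le_succ 1 (algebraMap_mem 1))))
      (nsmul_mem (ι_one_pow_mem n) _)

lemma ι_one_pow_mul_c_not_mem [CharZero K] (t : ℕ) : ∀ n : ℕ, x₃ ^ n * c K t ∉ 𝒮 n
  | 0, hmem => c_ne_zero t (by simpa using mem_submodule_zero.1 hmem)
  | n + 1, hmem => by
    have hshift : φ 0 1 (x₃ ^ (n + 1) * c K t) - x₃ ^ (n + 1) * c K t
        = ((x₃ + 1) ^ (n + 1) - x₃ ^ (n + 1)) * c K t := by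
      rw [map_mul, map_pow, φ_c (zero_mem _) 1 t, φ_ι_one, map_one, sub_mul]
    have hdiff := mem_submodule_succ.1 hmem 0 (zero_mem _) 1
    rw [hshift] at hdiff
    have hlead : (n + 1) • (x₃ ^ n * c K t) ∈ 𝒮 n := by
      have := sub_mem hdiff (mul_mem (add_one_pow_sub_pow_sub_mem n) (c_mem t))
      rwa [← sub_mul, sub_sub_cancel, smul_mul_assoc] at this
    exact ι_one_pow_mul_c_not_mem t n ((Submodule.nsmul_succ_mem_iff _ n).1 hlead)

end SS

end

theorem comm_ck_x2_not_in_Sm (K : Type) [Field K] [CharZero K] (k m : ℕ) (hm : 1 ≤ m) :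
    c K k * ι K 0 - ι K 0 * c K k ∉ SS K m := by
  obtain ⟨n, rfl⟩ : ∃ n, m = n + 1 := ⟨m - 1, by omega⟩
  rw [← SS.mem_submodule_iff]
  intro hmem
  have hg : (ι K 1 : A2 K) ^ (n + 1) ∈ Algebra.adjoin K {ι K 1} :=
    pow_mem (Algebra.self_mem_adjoin_singleton K _) _
  have hdiff := SS.mem_submodule_succ.1 hmem _ hg 0
  have hshift : φ (ι K 1 ^ (n + 1)) 0 (c K k * ι K 0 - ι K 0 * c K k)
        - (c K k * ι K 0 - ι K 0 * c K k)
      = c K k * ι K 1 ^ (n + 1) - ι K 1 ^ (n + 1) * c K k := by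
    rw [map_sub, map_mul, map_mul, φ_ι_zero, φ_c hg 0 k]
    noncomm_ring
  rw [hshift] at hdiff
  have hlead := sub_mem hdiff (SS.commutator_c_ι_one_pow_sub_mem k n)
  rw [sub_sub_cancel, Submodule.nsmul_succ_mem_iff] at hlead
  exact SS.ι_one_pow_mul_c_not_mem (k + 1) n hlead
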